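/- Let J ≥ 2, K ≥ 2 be integers and let u_{j,k} (0 ≤ j ≤ J, 0 ≤ k ≤ K) be real numbers vanishing whenever j ∈ {0,J} or k ∈ {0,K}. For all interior indices let J_{j,k} > 0, J̇_{j,k} ∈ ℝ, c_{j,k} ∈ ℝ; let X_{j±1/2,k}, Y_{j±1/2,k}, ẋ_{j±1/2,k}, ẏ_{j±1/2,k}, b1_{j±1/2,k}, b2_{j±1/2,k} be reals at horizontal half-points, and Ξ_{j,k±1/2}, Υ_{j,k±1/2}, ẋ_{j,k±1/2}, ẏ_{j,k±1/2}, b1_{j,k±1/2}, b2_{j,k±1/2} reals at vertical half-points; and at half-half points let a_{j−1/2,k−1/2} ≥ 0, J_{j−1/2,k−1/2} > 0 and X, Y, Ξ, Υ be reals. Define q₁_{j−1/2,k} := ((u_{j,k}+u_{j−1,k})/2)·[X_{j−1/2,k}(b1_{j−1/2,k}−ẋ_{j−1/2,k}) + Y_{j−1/2,k}(b2_{j−1/2,k}−ẏ_{j−1/2,k})], q₂_{j,k−1/2} := ((u_{j,k}+u_{j,k−1})/2)·[Ξ_{j,k−1/2}(b1_{j,k−1/2}−ẋ_{j,k−1/2})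 + Υ_{j,k−1/2}(b2_{j,k−1/2}−ẏ_{j,k−1/2})]; and with D1 := u_{j,k}−u_{j−1,k}+u_{j,k−1}−u_{j−1,k−1}, D2 := u_{j,k}−u_{j,k−1}+u_{j−1,k}−u_{j−1,k−1}, define p₁ := (a/(2J))[(X²+Y²)D1+(XΞ+YΥ)D2] and p₂ := (a/(2J))[(XΞ+YΥ)D1+(Ξ²+Υ²)D2] at half-half points. Assume for all 1 ≤ j ≤ J−1, 1 ≤ k ≤ K−1: (GCL) J̇_{j,k} = X_{j+1/2,k}ẋ_{j+1/2,k} − X_{j−1/2,k}ẋ_{j−1/2,k} + Y_{j+1/2,k}ẏ_{j+1/2,k} − Y_{j−1/2,k}ẏ_{j−1/2,k} + Ξ_{j,k+1/2}ẋ_{j,k+1/2} − Ξ_{j,k−1/2}ẋ_{j,k−1/2} + Υ_{j,k+1/2}ẏ_{j,k+1/2} − Υ_{j,k−1/2}ẏ_{j,k−1/2}; and (coefficient condition) J_{j,k}c_{j,k} + (1/2)[X_{j+1/2,k}b1_{j+1/2,k} − X_{j−1/2,k}b1_{j−1/2,k} + Y_{j+1/2,k}b2_{j+1/2,k} − Y_{j−1/2,k}b2_{j−1/2,k}]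 + (1/2)[Ξ_{j,k+1/2}b1_{j,k+1/2} − Ξ_{j,k−1/2}b1_{j,k−1/2} + Υ_{j,k+1/2}b2_{j,k+1/2} − Υ_{j,k−1/2}b2_{j,k−1/2}] ≥ 0. Then −(1/2)∑_{j=1}^{J−1}∑_{k=1}^{K−1} J̇_{j,k}u_{j,k}² − ∑_{j=1}^{J−1}∑_{k=1}^{K−1} c_{j,k}J_{j,k}u_{j,k}² − ∑_{j=1}^{J}∑_{k=1}^{K−1} q₁_{j−1/2,k}(u_{j−1,k}−u_{j,k}) − ∑_{j=1}^{J−1}∑_{k=1}^{K} q₂_{j,k−1/2}(u_{j,k−1}−u_{j,k}) − (1/2)∑_{j=1}^{J}∑_{k=1}^{K} [p₁·D1 + p₂·D2]_{j−1/2,k−1/2} ≤ 0. -/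
import Mathlib

lemma key_tel (f g : ℕ → ℝ) (n : ℕ) :
    ∑ i ∈ Finset.range (n+1), (f (i+1) - f i) * g (i+1)
      = f (n+1) * g (n+1) - f 0 * g 1
        - ∑ i ∈ Finset.range n, f (i+1) * (g (i+2) - g (i+1)) := by
  induction n with
  | zero => simp; ring
  | succ n ih => rw [Finset.sum_range_succ, ih, Finset.sum_range_succ]; ring

lemma sbp (n : ℕ) (f g : ℕ → ℝ) (h0 : f 0 = 0) (hn : f (n+1) = 0) :
    ∑ j ∈ Finset.Icc 1 (n+1), (f j - f (j-1)) * g j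
      = ∑ j ∈ Finset.Icc 1 n, f j * (g j - g (j+1)) := by
  rw [← Finset.Ico_add_one_right_eq_Icc, ← Finset.Ico_add_one_right_eq_Icc, Finset.sum_Ico_eq_sum_range,
    Finset.sum_Ico_eq_sum_range]
  simp only [Nat.add_sub_cancel, Nat.add_sub_cancel_left, Nat.succ_sub_one, add_comm 1]
  rw [key_tel f g n, h0, hn, zero_mul, zero_mul, sub_zero, zero_sub,
    ← Finset.sum_neg_distrib]
  exact Finset.sum_congr rfl fun i _ => by ring



/-- Theorem 4.1 of the paper: negative semidefiniteness of the 2D moving mesh central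
finite difference discretization. Nodal data: `u` (vanishing on the boundary),
Jacobian `Jc > 0`, its time derivative `Jd`, reaction coefficient `c`. Horizontal
half-point data (first index `j` means `j-1/2`): metric terms `X = Jξ_x`, `Y = Jξ_y`,
mesh speeds `xdH, ydH`, convection coefficients `b1H, b2H`. Vertical half-point data
(second index `k` means `k-1/2`): `Xi = Jη_x`, `Up = Jη_y`, `xdV, ydV, b1V, b2V`.
Half-half (cell-center) data: `aC ≥ 0`, `JcC > 0`, metric terms `XC, YC, XiC, UpC`.
`q1, q2` are the convection fluxes and `p1, p2` the diffusion fluxes of the scheme.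
Under the discrete geometric conservation law (gcl-1) and the discrete coefficient
condition (coef-4), the quantity `uᵀ(A + √M d√M/dt)u` is nonpositive. -/
theorem moving_mesh_negSemidef_2d
    (J K : ℕ) (hJ : 2 ≤ J) (hK : 2 ≤ K)
    (u Jc Jd c : ℕ → ℕ → ℝ)
    (X Y xdH ydH b1H b2H : ℕ → ℕ → ℝ)
    (Xi Up xdV ydV b1V b2V : ℕ → ℕ → ℝ)
    (aC JcC XC YC XiC UpC : ℕ → ℕ → ℝ)
    (q1 q2 p1 p2 : ℕ → ℕ → ℝ)
    (hu : ∀ j ≤ J, ∀ k ≤ K, (j = 0 ∨ j = J ∨ k = 0 ∨ k = K) → u j k = 0)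
    (hJc : ∀ j ∈ Finset.Icc 1 (J - 1), ∀ k ∈ Finset.Icc 1 (K - 1), 0 < Jc j k)
    (haC : ∀ j ∈ Finset.Icc 1 J, ∀ k ∈ Finset.Icc 1 K, 0 ≤ aC j k)
    (hJcC : ∀ j ∈ Finset.Icc 1 J, ∀ k ∈ Finset.Icc 1 K, 0 < JcC j k)
    (hq1 : ∀ j ∈ Finset.Icc 1 J, ∀ k ∈ Finset.Icc 1 (K - 1), q1 j k =
      ((u j k + u (j - 1) k) / 2)
        * (X j k * (b1H j k - xdH j k) + Y j k * (b2H j k - ydH j k)))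
    (hq2 : ∀ j ∈ Finset.Icc 1 (J - 1), ∀ k ∈ Finset.Icc 1 K, q2 j k =
      ((u j k + u j (k - 1)) / 2)
        * (Xi j k * (b1V j k - xdV j k) + Up j k * (b2V j k - ydV j k)))
    (hp1 : ∀ j ∈ Finset.Icc 1 J, ∀ k ∈ Finset.Icc 1 K, p1 j k =
      (aC j k / (2 * JcC j k))
        * ((XC j k ^ 2 + YC j k ^ 2)
              * (u j k - u (j - 1) k + u j (k - 1) - u (j - 1) (k - 1))
            + (XC j k * XiC j k + YC j k * UpC j k)
              * (u j k - u j (k - 1) + u (j - 1) k - u (j - 1) (k - 1))))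
    (hp2 : ∀ j ∈ Finset.Icc 1 J, ∀ k ∈ Finset.Icc 1 K, p2 j k =
      (aC j k / (2 * JcC j k))
        * ((XC j k * XiC j k + YC j k * UpC j k)
              * (u j k - u (j - 1) k + u j (k - 1) - u (j - 1) (k - 1))
            + (XiC j k ^ 2 + UpC j k ^ 2)
              * (u j k - u j (k - 1) + u (j - 1) k - u (j - 1) (k - 1))))
    (hgcl : ∀ j ∈ Finset.Icc 1 (J - 1), ∀ k ∈ Finset.Icc 1 (K - 1), Jd j k =
      X (j + 1) k * xdH (j + 1) k - X j k * xdH j k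
        + Y (j + 1) k * ydH (j + 1) k - Y j k * ydH j k
        + Xi j (k + 1) * xdV j (k + 1) - Xi j k * xdV j k
        + Up j (k + 1) * ydV j (k + 1) - Up j k * ydV j k)
    (hcoef : ∀ j ∈ Finset.Icc 1 (J - 1), ∀ k ∈ Finset.Icc 1 (K - 1),
      0 ≤ Jc j k * c j k
        + (1 / 2 : ℝ) * (X (j + 1) k * b1H (j + 1) k - X j k * b1H j k
            + Y (j + 1) k * b2H (j + 1) k - Y j k * b2H j k)
        + (1 / 2 : ℝ) * (Xi j (k + 1) * b1V j (k + 1) - Xi j k * b1V j k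
            + Up j (k + 1) * b2V j (k + 1) - Up j k * b2V j k)) :
    -(1 / 2 : ℝ) * (∑ j ∈ Finset.Icc 1 (J - 1), ∑ k ∈ Finset.Icc 1 (K - 1),
          Jd j k * u j k ^ 2)
      - (∑ j ∈ Finset.Icc 1 (J - 1), ∑ k ∈ Finset.Icc 1 (K - 1),
          c j k * Jc j k * u j k ^ 2)
      - (∑ j ∈ Finset.Icc 1 J, ∑ k ∈ Finset.Icc 1 (K - 1),
          q1 j k * (u (j - 1) k - u j k))
      - (∑ j ∈ Finset.Icc 1 (J - 1), ∑ k ∈ Finset.Icc 1 K,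
          q2 j k * (u j (k - 1) - u j k))
      - (1 / 2 : ℝ) * (∑ j ∈ Finset.Icc 1 J, ∑ k ∈ Finset.Icc 1 K,
          (p1 j k * (u j k - u (j - 1) k + u j (k - 1) - u (j - 1) (k - 1))
            + p2 j k * (u j k - u j (k - 1) + u (j - 1) k - u (j - 1) (k - 1))))
    ≤ 0 := by
  have hJ1 : J - 1 + 1 = J := by omega
  have hK1 : K - 1 + 1 = K := by omega
  -- summation by parts for the q1 sum
  have T3eq : (∑ j ∈ Finset.Icc 1 J, ∑ k ∈ Finset.Icc 1 (K - 1),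
        q1 j k * (u (j - 1) k - u j k))
      = ∑ j ∈ Finset.Icc 1 (J - 1), ∑ k ∈ Finset.Icc 1 (K - 1), u j k ^ 2 *
          ((X (j+1) k * (b1H (j+1) k - xdH (j+1) k) + Y (j+1) k * (b2H (j+1) k - ydH (j+1) k)
            - (X j k * (b1H j k - xdH j k) + Y j k * (b2H j k - ydH j k))) / 2) := by
    have inner : ∀ k ∈ Finset.Icc 1 (K - 1),
        (∑ j ∈ Finset.Icc 1 J, q1 j k * (u (j - 1) k - u j k))
          = ∑ j ∈ Finset.Icc 1 (J - 1), u j k ^ 2 *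
              ((X (j+1) k * (b1H (j+1) k - xdH (j+1) k)
                  + Y (j+1) k * (b2H (j+1) k - ydH (j+1) k)
                - (X j k * (b1H j k - xdH j k) + Y j k * (b2H j k - ydH j k))) / 2) := by
      intro k hk
      have hkK : k ≤ K := by have := (Finset.mem_Icc.mp hk).2; omega
      have h0 : u 0 k ^ 2 = 0 := by
        rw [hu 0 (by omega) k hkK (Or.inl rfl)]; ring
      have hn : u J k ^ 2 = 0 := by
        rw [hu J le_rfl k hkK (Or.inr (Or.inl rfl))]; ring
      have key := sbp (J - 1) (fun j => u j k ^ 2)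
          (fun j => -(X j k * (b1H j k - xdH j k) + Y j k * (b2H j k - ydH j k)) / 2)
          h0 (by rw [hJ1]; exact hn)
      rw [hJ1] at key
      calc ∑ j ∈ Finset.Icc 1 J, q1 j k * (u (j - 1) k - u j k)
          = ∑ j ∈ Finset.Icc 1 J, (u j k ^ 2 - u (j - 1) k ^ 2) *
              (-(X j k * (b1H j k - xdH j k) + Y j k * (b2H j k - ydH j k)) / 2) := by
            exact Finset.sum_congr rfl fun j hj => by rw [hq1 j hj k hk]; ring
        _ = ∑ j ∈ Finset.Icc 1 (J - 1), u j k ^ 2 *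
              (-(X j k * (b1H j k - xdH j k) + Y j k * (b2H j k - ydH j k)) / 2
               - -(X (j+1) k * (b1H (j+1) k - xdH (j+1) k)
                    + Y (j+1) k * (b2H (j+1) k - ydH (j+1) k)) / 2) := key
        _ = _ := Finset.sum_congr rfl fun j hj => by ring
    calc (∑ j ∈ Finset.Icc 1 J, ∑ k ∈ Finset.Icc 1 (K - 1),
            q1 j k * (u (j - 1) k - u j k))
        = ∑ k ∈ Finset.Icc 1 (K - 1), ∑ j ∈ Finset.Icc 1 J,
            q1 j k * (u (j - 1) k - u j k) := Finset.sum_comm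
      _ = ∑ k ∈ Finset.Icc 1 (K - 1), ∑ j ∈ Finset.Icc 1 (J - 1), u j k ^ 2 *
            ((X (j+1) k * (b1H (j+1) k - xdH (j+1) k)
                + Y (j+1) k * (b2H (j+1) k - ydH (j+1) k)
              - (X j k * (b1H j k - xdH j k) + Y j k * (b2H j k - ydH j k))) / 2) :=
          Finset.sum_congr rfl inner
      _ = _ := Finset.sum_comm
  -- summation by parts for the q2 sum
  have T4eq : (∑ j ∈ Finset.Icc 1 (J - 1), ∑ k ∈ Finset.Icc 1 K,
        q2 j k * (u j (k - 1) - u j k))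
      = ∑ j ∈ Finset.Icc 1 (J - 1), ∑ k ∈ Finset.Icc 1 (K - 1), u j k ^ 2 *
          ((Xi j (k+1) * (b1V j (k+1) - xdV j (k+1)) + Up j (k+1) * (b2V j (k+1) - ydV j (k+1))
            - (Xi j k * (b1V j k - xdV j k) + Up j k * (b2V j k - ydV j k))) / 2) := by
    refine Finset.sum_congr rfl fun j hj => ?_
    have hjJ : j ≤ J := by have := (Finset.mem_Icc.mp hj).2; omega
    have h0 : u j 0 ^ 2 = 0 := by
      rw [hu j hjJ 0 (by omega) (Or.inr (Or.inr (Or.inl rfl)))]; ring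
    have hn : u j K ^ 2 = 0 := by
      rw [hu j hjJ K le_rfl (Or.inr (Or.inr (Or.inr rfl)))]; ring
    have key := sbp (K - 1) (fun k => u j k ^ 2)
        (fun k => -(Xi j k * (b1V j k - xdV j k) + Up j k * (b2V j k - ydV j k)) / 2)
        h0 (by rw [hK1]; exact hn)
    rw [hK1] at key
    calc ∑ k ∈ Finset.Icc 1 K, q2 j k * (u j (k - 1) - u j k)
        = ∑ k ∈ Finset.Icc 1 K, (u j k ^ 2 - u j (k - 1) ^ 2) *
            (-(Xi j k * (b1V j k - xdV j k) + Up j k * (b2V j k - ydV j k)) / 2) := by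
          exact Finset.sum_congr rfl fun k hk => by rw [hq2 j hj k hk]; ring
      _ = ∑ k ∈ Finset.Icc 1 (K - 1), u j k ^ 2 *
            (-(Xi j k * (b1V j k - xdV j k) + Up j k * (b2V j k - ydV j k)) / 2
             - -(Xi j (k+1) * (b1V j (k+1) - xdV j (k+1))
                  + Up j (k+1) * (b2V j (k+1) - ydV j (k+1))) / 2) := key
      _ = _ := Finset.sum_congr rfl fun k hk => by ring
  -- diffusion sum is nonnegative
  have h2 : (0:ℝ) ≤ ∑ j ∈ Finset.Icc 1 J, ∑ k ∈ Finset.Icc 1 K,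
      (p1 j k * (u j k - u (j - 1) k + u j (k - 1) - u (j - 1) (k - 1))
        + p2 j k * (u j k - u j (k - 1) + u (j - 1) k - u (j - 1) (k - 1))) := by
    refine Finset.sum_nonneg fun j hj => Finset.sum_nonneg fun k hk => ?_
    rw [hp1 j hj k hk, hp2 j hj k hk]
    have hrw : (aC j k / (2 * JcC j k))
          * ((XC j k ^ 2 + YC j k ^ 2)
                * (u j k - u (j - 1) k + u j (k - 1) - u (j - 1) (k - 1))
              + (XC j k * XiC j k + YC j k * UpC j k)
                * (u j k - u j (k - 1) + u (j - 1) k - u (j - 1) (k - 1)))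
            * (u j k - u (j - 1) k + u j (k - 1) - u (j - 1) (k - 1))
        + (aC j k / (2 * JcC j k))
          * ((XC j k * XiC j k + YC j k * UpC j k)
                * (u j k - u (j - 1) k + u j (k - 1) - u (j - 1) (k - 1))
              + (XiC j k ^ 2 + UpC j k ^ 2)
                * (u j k - u j (k - 1) + u (j - 1) k - u (j - 1) (k - 1)))
            * (u j k - u j (k - 1) + u (j - 1) k - u (j - 1) (k - 1))
        = (aC j k / (2 * JcC j k))
          * ((XC j k * (u j k - u (j - 1) k + u j (k - 1) - u (j - 1) (k - 1))
                + XiC j k * (u j k - u j (k - 1) + u (j - 1) k - u (j - 1) (k - 1))) ^ 2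
            + (YC j k * (u j k - u (j - 1) k + u j (k - 1) - u (j - 1) (k - 1))
                + UpC j k * (u j k - u j (k - 1) + u (j - 1) k - u (j - 1) (k - 1))) ^ 2) := by
      ring
    rw [hrw]
    have hd : (0:ℝ) ≤ aC j k / (2 * JcC j k) :=
      div_nonneg (haC j hj k hk) (by linarith [hJcC j hj k hk])
    exact mul_nonneg hd (by positivity)
  rw [T3eq, T4eq]
  -- combine the convection / reaction / Jd terms
  have h1 : -(1 / 2 : ℝ) * (∑ j ∈ Finset.Icc 1 (J - 1), ∑ k ∈ Finset.Icc 1 (K - 1),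
          Jd j k * u j k ^ 2)
      - (∑ j ∈ Finset.Icc 1 (J - 1), ∑ k ∈ Finset.Icc 1 (K - 1),
          c j k * Jc j k * u j k ^ 2)
      - (∑ j ∈ Finset.Icc 1 (J - 1), ∑ k ∈ Finset.Icc 1 (K - 1), u j k ^ 2 *
          ((X (j+1) k * (b1H (j+1) k - xdH (j+1) k) + Y (j+1) k * (b2H (j+1) k - ydH (j+1) k)
            - (X j k * (b1H j k - xdH j k) + Y j k * (b2H j k - ydH j k))) / 2))
      - (∑ j ∈ Finset.Icc 1 (J - 1), ∑ k ∈ Finset.Icc 1 (K - 1), u j k ^ 2 *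
          ((Xi j (k+1) * (b1V j (k+1) - xdV j (k+1)) + Up j (k+1) * (b2V j (k+1) - ydV j (k+1))
            - (Xi j k * (b1V j k - xdV j k) + Up j k * (b2V j k - ydV j k))) / 2)) ≤ 0 := by
    have hEq : -(1 / 2 : ℝ) * (∑ j ∈ Finset.Icc 1 (J - 1), ∑ k ∈ Finset.Icc 1 (K - 1),
            Jd j k * u j k ^ 2)
        - (∑ j ∈ Finset.Icc 1 (J - 1), ∑ k ∈ Finset.Icc 1 (K - 1),
            c j k * Jc j k * u j k ^ 2)
        - (∑ j ∈ Finset.Icc 1 (J - 1), ∑ k ∈ Finset.Icc 1 (K - 1), u j k ^ 2 *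
            ((X (j+1) k * (b1H (j+1) k - xdH (j+1) k) + Y (j+1) k * (b2H (j+1) k - ydH (j+1) k)
              - (X j k * (b1H j k - xdH j k) + Y j k * (b2H j k - ydH j k))) / 2))
        - (∑ j ∈ Finset.Icc 1 (J - 1), ∑ k ∈ Finset.Icc 1 (K - 1), u j k ^ 2 *
            ((Xi j (k+1) * (b1V j (k+1) - xdV j (k+1)) + Up j (k+1) * (b2V j (k+1) - ydV j (k+1))
              - (Xi j k * (b1V j k - xdV j k) + Up j k * (b2V j k - ydV j k))) / 2))
        = ∑ j ∈ Finset.Icc 1 (J - 1), ∑ k ∈ Finset.Icc 1 (K - 1),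
            (-(1 / 2 : ℝ) * (Jd j k * u j k ^ 2)
              - c j k * Jc j k * u j k ^ 2
              - u j k ^ 2 *
                ((X (j+1) k * (b1H (j+1) k - xdH (j+1) k)
                    + Y (j+1) k * (b2H (j+1) k - ydH (j+1) k)
                  - (X j k * (b1H j k - xdH j k) + Y j k * (b2H j k - ydH j k))) / 2)
              - u j k ^ 2 *
                ((Xi j (k+1) * (b1V j (k+1) - xdV j (k+1))
                    + Up j (k+1) * (b2V j (k+1) - ydV j (k+1))
                  - (Xi j k * (b1V j k - xdV j k) + Up j k * (b2V j k - ydV j k))) / 2)) := by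
      simp only [Finset.mul_sum, ← Finset.sum_sub_distrib]
    rw [hEq]
    refine Finset.sum_nonpos fun j hj => Finset.sum_nonpos fun k hk => ?_
    have e : -(1 / 2 : ℝ) * (Jd j k * u j k ^ 2)
          - c j k * Jc j k * u j k ^ 2
          - u j k ^ 2 *
            ((X (j+1) k * (b1H (j+1) k - xdH (j+1) k)
                + Y (j+1) k * (b2H (j+1) k - ydH (j+1) k)
              - (X j k * (b1H j k - xdH j k) + Y j k * (b2H j k - ydH j k))) / 2)
          - u j k ^ 2 *
            ((Xi j (k+1) * (b1V j (k+1) - xdV j (k+1))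
                + Up j (k+1) * (b2V j (k+1) - ydV j (k+1))
              - (Xi j k * (b1V j k - xdV j k) + Up j k * (b2V j k - ydV j k))) / 2)
        = -(u j k ^ 2 * (Jc j k * c j k
            + (1 / 2 : ℝ) * (X (j + 1) k * b1H (j + 1) k - X j k * b1H j k
                + Y (j + 1) k * b2H (j + 1) k - Y j k * b2H j k)
            + (1 / 2 : ℝ) * (Xi j (k + 1) * b1V j (k + 1) - Xi j k * b1V j k
                + Up j (k + 1) * b2V j (k + 1) - Up j k * b2V j k))) := by
      rw [hgcl j hj k hk]; ring
    rw [e]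
    exact neg_nonpos.mpr (mul_nonneg (sq_nonneg _) (hcoef j hj k hk))
  linarith
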